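/- arXiv:1807.05328 — 2 statements merged into one kernel-verified Lean document; each statement's English description precedes it below -/
import Mathlib

section
/- Suppose each f_i : ℝ^d → ℝ (i = 1,…,n, n ≥ 2) is Λ-smooth, F(w) = (1/n) ∑_{i=1}^n f_i(w) is λ-strongly convex with global minimizer w_*, and 1 ≤ b ≤ n. Set κ = Λ/λ, β(b) = (n−b)/(b(n−1)), and N = (2/n) ∑_{i=1}^n ‖∇f_i(w_*)‖². Then for every w ∈ ℝ^d, the uniform average over all size-b subsets S of {1,…,n} satisfies E_S[‖∇F^S(w)‖²] ≤ 4 β(b) Λ κ (F(w) − F(w_*)) + 2‖∇F(w)‖² + N. -/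
/-!
Counting the size-`b` subsets that contain a given index, or a given pair of indices, yields the
exact identity `E_S ‖∇F^S(w)‖² = β · (1/n) ∑ ‖∇f_i(w)‖² + (1 - β) ‖∇F(w)‖²`. Smoothness bounds
`‖∇f_i(w)‖²` by `2Λ²‖w - w_*‖² + 2‖∇f_i(w_*)‖²`, and strong convexity at the minimizer, where
`∇F` vanishes, gives `‖w - w_*‖² ≤ 2 (F(w) - F(w_*)) / λ`; since `0 ≤ β ≤ 1` this is the bound.
-/

open scoped RealInnerProductSpace
open Finset

lemma Finset.card_filter_powersetCard_superset_mul_choose {α : Type*} [DecidableEq α]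
    {s t : Finset α} (hts : t ⊆ s) (k : ℕ) :
    #{S ∈ s.powersetCard k | t ⊆ S} * (#s).choose #t = (#s).choose k * k.choose #t := by
  rcases le_or_gt #t k with htk | hkt
  · rw [card_filter_powersetCard_subset t s k hts htk, Nat.choose_mul htk, mul_comm]
  · have : #{S ∈ s.powersetCard k | t ⊆ S} = 0 := by
      rw [card_eq_zero, filter_eq_empty_iff]
      intro S hS htS
      have := card_le_card htS
      rw [(mem_powersetCard.1 hS).2] at this
      omega
    simp [this, Nat.choose_eq_zero_of_lt hkt]

section InnerProduct

variable {ι E : Type*} [Fintype ι] [NormedAddCommGroup E] [InnerProductSpace ℝ E]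

lemma sum_sum_mul_inner_of_diag_offDiag (g : ι → E) {c : ι → ι → ℝ} {a m : ℝ}
    (hdiag : ∀ i, c i i = a) (hoff : ∀ i j, i ≠ j → c i j = m) :
    ∑ i, ∑ j, c i j * ⟪g i, g j⟫ = m * ‖∑ i, g i‖ ^ 2 + (a - m) * ∑ i, ‖g i‖ ^ 2 := by
  classical
  have hc : ∀ i j, c i j = m + if i = j then a - m else 0 := by
    intro i j
    by_cases hij : i = j
    · subst hij; simp [hdiag]
    · simp [hoff i j hij, hij]
  simp only [hc, add_mul, sum_add_distrib, ite_mul, zero_mul, sum_ite_eq, mem_univ, if_true,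
    ← mul_sum, ← sum_inner, ← inner_sum, real_inner_self_eq_norm_sq]

variable [DecidableEq ι]

lemma sum_powersetCard_norm_sum_sq (b : ℕ) (g : ι → E) :
    ∑ S ∈ powersetCard b univ, ‖∑ i ∈ S, g i‖ ^ 2
      = ∑ i, ∑ j, (#{S ∈ powersetCard b univ | {i, j} ⊆ S} : ℝ) * ⟪g i, g j⟫ := by
  have hS : ∀ S : Finset ι, ‖∑ i ∈ S, g i‖ ^ 2
      = ∑ i, ∑ j, if {i, j} ⊆ S then ⟪g i, g j⟫ else 0 := by
    intro S
    simp only [insert_subset_iff, singleton_subset_iff, ite_and, sum_ite_irrel, sum_const_zero,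
      ← sum_filter, filter_mem_eq_inter, univ_inter]
    rw [← real_inner_self_eq_norm_sq, sum_inner]
    simp only [inner_sum]
  simp only [hS]
  rw [sum_comm]
  refine sum_congr rfl fun i _ => ?_
  rw [sum_comm]
  refine sum_congr rfl fun j _ => ?_
  rw [← sum_filter, sum_const, nsmul_eq_mul]

theorem sum_powersetCard_norm_sq_mean_div_choose {n b : ℕ} (hι : Fintype.card ι = n)
    (hn : 2 ≤ n) (hb : 1 ≤ b) (hbn : b ≤ n) (g : ι → E) :
    (∑ S ∈ powersetCard b univ, ‖(b : ℝ)⁻¹ • ∑ i ∈ S, g i‖ ^ 2) / n.choose b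
      = ((n : ℝ) - b) / (b * ((n : ℝ) - 1)) * ((∑ i, ‖g i‖ ^ 2) / n)
        + (1 - ((n : ℝ) - b) / (b * ((n : ℝ) - 1))) * ‖(n : ℝ)⁻¹ • ∑ i, g i‖ ^ 2 := by
  have hn' : (2 : ℝ) ≤ n := by exact_mod_cast hn
  have hb' : (1 : ℝ) ≤ b := by exact_mod_cast hb
  have hn1 : (n : ℝ) - 1 ≠ 0 := by linarith
  have hC : (0 : ℝ) < n.choose b := by exact_mod_cast Nat.choose_pos hbn
  have hcount (t : Finset ι) :
      (#{S ∈ powersetCard b univ | t ⊆ S} : ℝ) * n.choose #t = n.choose b * b.choose #t := by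
    have := card_filter_powersetCard_superset_mul_choose (subset_univ t) b
    rw [card_univ, hι] at this
    exact_mod_cast this
  have hdiag (i : ι) :
      (#{S ∈ powersetCard b univ | {i, i} ⊆ S} : ℝ) = n.choose b * b / n := by
    have := hcount {i}
    rw [card_singleton, Nat.choose_one_right, Nat.choose_one_right] at this
    rw [insert_eq_of_mem (mem_singleton_self i), eq_div_iff (by positivity), this]
  have hoff (i j : ι) (hij : i ≠ j) :
      (#{S ∈ powersetCard b univ | {i, j} ⊆ S} : ℝ)
        = n.choose b * (b * (b - 1)) / (n * (n - 1)) := by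
    have := hcount {i, j}
    rw [card_pair hij, Nat.cast_choose_two, Nat.cast_choose_two] at this
    rw [eq_div_iff (by positivity)]
    linarith
  simp only [norm_smul, mul_pow, ← mul_sum, sum_powersetCard_norm_sum_sq,
    sum_sum_mul_inner_of_diag_offDiag g hdiag hoff, norm_inv, Real.norm_natCast]
  field_simp
  ring

end InnerProduct

lemma norm_sq_le_two_mul_norm_sub_sq_add {E : Type*} [SeminormedAddCommGroup E] (a b : E) :
    ‖a‖ ^ 2 ≤ 2 * ‖a - b‖ ^ 2 + 2 * ‖b‖ ^ 2 := by
  calc ‖a‖ ^ 2 ≤ (‖a - b‖ + ‖b‖) ^ 2 := by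
        gcongr
        simpa using norm_add_le (a - b) b
    _ ≤ 2 * ‖a - b‖ ^ 2 + 2 * ‖b‖ ^ 2 := by linarith [add_sq_le (a := ‖a - b‖) (b := ‖b‖)]

lemma sum_norm_sq_le_of_norm_sub_le {ι E : Type*} [Fintype ι] [SeminormedAddCommGroup E]
    {u v : ι → E} {r : ℝ} (huv : ∀ i, ‖u i - v i‖ ≤ r) :
    ∑ i, ‖u i‖ ^ 2 ≤ Fintype.card ι * (2 * r ^ 2) + 2 * ∑ i, ‖v i‖ ^ 2 := by
  have hi (i : ι) : ‖u i‖ ^ 2 ≤ 2 * r ^ 2 + 2 * ‖v i‖ ^ 2 := by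
    have := pow_le_pow_left₀ (norm_nonneg _) (huv i) 2
    linarith [norm_sq_le_two_mul_norm_sub_sq_add (u i) (v i)]
  calc ∑ i, ‖u i‖ ^ 2 ≤ ∑ i, (2 * r ^ 2 + 2 * ‖v i‖ ^ 2) := sum_le_sum fun i _ => hi i
    _ = Fintype.card ι * (2 * r ^ 2) + 2 * ∑ i, ‖v i‖ ^ 2 := by
        rw [sum_add_distrib, sum_const, card_univ, nsmul_eq_mul, mul_sum]

lemma sub_div_mul_sub_one_mem_Icc {n b : ℕ} (hb : 1 ≤ b) (hbn : b ≤ n) :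
    ((n : ℝ) - b) / (b * ((n : ℝ) - 1)) ∈ Set.Icc 0 1 := by
  have hb' : (1 : ℝ) ≤ b := by exact_mod_cast hb
  have hbn' : (b : ℝ) ≤ n := by exact_mod_cast hbn
  refine ⟨div_nonneg (by linarith) (by nlinarith), div_le_one_of_le₀ ?_ (by nlinarith)⟩
  nlinarith

section Gradient

variable {E : Type*} [NormedAddCommGroup E] [InnerProductSpace ℝ E] [CompleteSpace E]

lemma IsLocalMin.gradient_eq_zero {f : E → ℝ} {x : E} (h : IsLocalMin f x) :
    gradient f x = 0 := by
  simp [gradient, h.fderiv_eq_zero]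

lemma gradient_const_mul_sum {ι : Type*} [Fintype ι] {f : ι → E → ℝ} {x : E}
    (hf : ∀ i, DifferentiableAt ℝ (f i) x) (c : ℝ) :
    gradient (fun y => c * ∑ i, f i y) x = c • ∑ i, gradient (f i) x := by
  refine HasGradientAt.gradient ?_
  rw [hasGradientAt_iff_hasFDerivAt, map_smul, map_sum]
  exact (HasFDerivAt.fun_sum fun i _ => (hf i).hasGradientAt.hasFDerivAt).const_mul c

lemma IsLocalMin.mul_norm_sub_sq_le_sub {F : E → ℝ} {lam : ℝ} {x : E} (hx : IsLocalMin F x)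
    (hsc : ∀ w, F w ≥ F x + ⟪gradient F x, w - x⟫ + lam / 2 * ‖w - x‖ ^ 2) (w : E) :
    lam / 2 * ‖w - x‖ ^ 2 ≤ F w - F x := by
  have := hsc w
  rw [hx.gradient_eq_zero, inner_zero_left] at this
  linarith

end Gradient

theorem stmt3 (d n b : ℕ) (hn : 2 ≤ n) (hb1 : 1 ≤ b) (hbn : b ≤ n)
    (Λ lam : ℝ) (hlam : 0 < lam)
    (f : Fin n → EuclideanSpace ℝ (Fin d) → ℝ)
    (hdiff : ∀ i, Differentiable ℝ (f i))
    (hsmooth : ∀ i, ∀ w w' : EuclideanSpace ℝ (Fin d),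
      ‖gradient (f i) w' - gradient (f i) w‖ ≤ Λ * ‖w' - w‖)
    (F : EuclideanSpace ℝ (Fin d) → ℝ) (hF : ∀ w, F w = (n : ℝ)⁻¹ * ∑ i, f i w)
    (hsc : ∀ w w' : EuclideanSpace ℝ (Fin d),
      F w' ≥ F w + ⟪gradient F w, w' - w⟫ + lam / 2 * ‖w' - w‖ ^ 2)
    (wstar : EuclideanSpace ℝ (Fin d)) (hmin : ∀ w, F wstar ≤ F w)
    (κ β N : ℝ) (hκ : κ = Λ / lam)
    (hβ : β = ((n : ℝ) - b) / (b * ((n : ℝ) - 1)))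
    (hN : N = 2 / (n : ℝ) * ∑ i, ‖gradient (f i) wstar‖ ^ 2)
    (w : EuclideanSpace ℝ (Fin d)) :
    (∑ S ∈ Finset.powersetCard b (Finset.univ : Finset (Fin n)),
        ‖(b : ℝ)⁻¹ • ∑ i ∈ S, gradient (f i) w‖ ^ 2) / (n.choose b : ℝ)
      ≤ 4 * β * Λ * κ * (F w - F wstar) + 2 * ‖gradient F w‖ ^ 2 + N := by
  have hn' : (0 : ℝ) < n := Nat.cast_pos.2 (by omega)
  have hgradF : gradient F w = (n : ℝ)⁻¹ • ∑ i, gradient (f i) w := by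
    rw [funext hF]
    exact gradient_const_mul_sum (fun i => hdiff i w) _
  have hwstar : IsLocalMin F wstar := Filter.Eventually.of_forall hmin
  have hgrowth := hwstar.mul_norm_sub_sq_le_sub (hsc wstar) w
  have hmean : (∑ i, ‖gradient (f i) w‖ ^ 2) / n ≤ 2 * Λ ^ 2 * ‖w - wstar‖ ^ 2 + N := by
    have := sum_norm_sq_le_of_norm_sub_le fun i => hsmooth i wstar w
    rw [Fintype.card_fin, mul_pow] at this
    rw [div_le_iff₀ hn', hN]
    field_simp
    linarith
  have hdist : 2 * Λ ^ 2 * ‖w - wstar‖ ^ 2 ≤ 4 * Λ * κ * (F w - F wstar) :=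
    calc 2 * Λ ^ 2 * ‖w - wstar‖ ^ 2 = 4 * Λ ^ 2 / lam * (lam / 2 * ‖w - wstar‖ ^ 2) := by
          field_simp; ring
      _ ≤ 4 * Λ ^ 2 / lam * (F w - F wstar) := by gcongr
      _ = 4 * Λ * κ * (F w - F wstar) := by rw [hκ]; ring
  obtain ⟨hβ0, hβ1⟩ : 0 ≤ β ∧ β ≤ 1 := hβ ▸ sub_div_mul_sub_one_mem_Icc hb1 hbn
  have hN0 : 0 ≤ N := by rw [hN]; positivity
  rw [sum_powersetCard_norm_sq_mean_div_choose (Fintype.card_fin n) hn hb1 hbn, ← hβ, ← hgradF]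
  calc β * ((∑ i, ‖gradient (f i) w‖ ^ 2) / n) + (1 - β) * ‖gradient F w‖ ^ 2
      ≤ β * (2 * Λ ^ 2 * ‖w - wstar‖ ^ 2 + N) + 2 * ‖gradient F w‖ ^ 2 := by
        gcongr
        nlinarith [sq_nonneg ‖gradient F w‖]
    _ ≤ β * (4 * Λ * κ * (F w - F wstar)) + N + 2 * ‖gradient F w‖ ^ 2 := by
        nlinarith [mul_le_mul_of_nonneg_left hdist hβ0]
    _ = 4 * β * Λ * κ * (F w - F wstar) + 2 * ‖gradient F w‖ ^ 2 + N := by ring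
end

section
/- Fix d, m ≥ 1 and constants 0 < σ ≤ Σ, ε > 0, Λ̂ > 0. Let 𝓗^(0) be a real symmetric d×d matrix with Σ^{-1} I ⪯ 𝓗^(0) ⪯ σ^{-1} I, and let (s_j, y_j) ∈ ℝ^d × ℝ^d for j = 1,…,m be pairs with s_j ≠ 0 each satisfying the cautious-update conditions y_jᵀ s_j ≥ ε ‖s_j‖² and ‖y_j‖² ≤ Λ̂ (y_jᵀ s_j). Define the BFGS recursion 𝓗^(j) = 𝓗^(j−1) − (𝓗^(j−1) s_j s_jᵀ 𝓗^(j−1))/(s_jᵀ 𝓗^(j−1) s_j) + (y_j y_jᵀ)/(y_jᵀ s_j). Then each 𝓗^(j) is well defined (symmetric positive definite), and there exist constants 0 < μ₁ ≤ μ₂ depending only on d, m, σ, Σ, ε, Λ̂ such that H = (𝓗^(m))^{-1} satisfies μ₁ I ⪯ H ⪯ μ₂ I. -/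
open scoped Matrix RealInnerProductSpace
open Finset

noncomputable def bfgsUpdate {d : ℕ} (H : Matrix (Fin d) (Fin d) ℝ) (s y : Fin d → ℝ) :
    Matrix (Fin d) (Fin d) ℝ :=
  H - (s ⬝ᵥ H.mulVec s)⁻¹ • Matrix.vecMulVec (H.mulVec s) (Matrix.vecMul s H)
    + (y ⬝ᵥ s)⁻¹ • Matrix.vecMulVec y y

/-!
A BFGS update `U` of a positive definite `H` along a pair with `yᵀ s > 0` is again positive
definite because its inverse is explicit: `U⁻¹ = (I - ρ s yᵀ) H⁻¹ (I - ρ y sᵀ) + ρ s sᵀ` with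
`ρ = (yᵀ s)⁻¹`. Reading off the two quadratic forms, `U ⪯ H + ρ y yᵀ ⪯ H + Λ̂ I`, while the
cautious conditions give `ρ ‖s‖² ≤ ε⁻¹` and `ρ² ‖y‖² (sᵀx)² ≤ (Λ̂/ε) ‖x‖²`, hence
`U⁻¹ ⪯ (2 (1 + Λ̂/ε) γ + ε⁻¹) I` whenever `H⁻¹ ⪯ γ I`. After `m` steps from
`Σ⁻¹ I ⪯ 𝓗⁽⁰⁾ ⪯ σ⁻¹ I` this bounds `(𝓗⁽ᵐ⁾)⁻¹` above, and `𝓗⁽ᵐ⁾ ⪯ (σ⁻¹ + m Λ̂) I` bounds it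
below, since inversion is antitone on positive definite matrices.
-/

open Matrix
open scoped MatrixOrder

section QuadraticForm

variable {n : Type*} [Fintype n]

lemma sq_dotProduct_le (u v : n → ℝ) : (u ⬝ᵥ v) ^ 2 ≤ (u ⬝ᵥ u) * (v ⬝ᵥ v) := by
  simpa [dotProduct, sq] using Finset.sum_mul_sq_le_sq_mul_sq univ u v

lemma dotProduct_self_nonneg (u : n → ℝ) : 0 ≤ u ⬝ᵥ u := by
  simpa using dotProduct_star_self_nonneg u

lemma dotProduct_self_pos {u : n → ℝ} (hu : u ≠ 0) : 0 < u ⬝ᵥ u :=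
  (dotProduct_self_nonneg u).lt_of_ne fun h => hu (dotProduct_self_eq_zero.mp h.symm)

lemma Matrix.IsHermitian.dotProduct_mulVec_comm {A : Matrix n n ℝ} (hA : A.IsHermitian)
    (u v : n → ℝ) : u ⬝ᵥ A *ᵥ v = v ⬝ᵥ A *ᵥ u := by
  rw [dotProduct_mulVec, ← mulVec_transpose, ← conjTranspose_eq_transpose_of_trivial, hA.eq,
    dotProduct_comm]

lemma Matrix.PosSemidef.dotProduct_mulVec_self_nonneg {A : Matrix n n ℝ} (hA : A.PosSemidef)
    (x : n → ℝ) : 0 ≤ x ⬝ᵥ A *ᵥ x := by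
  simpa using hA.dotProduct_mulVec_nonneg x

variable [DecidableEq n]

lemma dotProduct_smul_one_mulVec (c : ℝ) (x : n → ℝ) :
    x ⬝ᵥ (c • (1 : Matrix n n ℝ)) *ᵥ x = c * (x ⬝ᵥ x) := by
  simp [smul_mulVec]

lemma Matrix.IsHermitian.smul_one_le_iff {A : Matrix n n ℝ} (hA : A.IsHermitian) (c : ℝ) :
    c • 1 ≤ A ↔ ∀ x, c * (x ⬝ᵥ x) ≤ x ⬝ᵥ A *ᵥ x := by
  rw [le_iff, posSemidef_iff_dotProduct_mulVec]
  simp only [hA.sub (isHermitian_one.smul (.all c)), true_and, star_trivial, sub_mulVec,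
    dotProduct_sub, dotProduct_smul_one_mulVec, sub_nonneg]

lemma Matrix.IsHermitian.le_smul_one_iff {A : Matrix n n ℝ} (hA : A.IsHermitian) (c : ℝ) :
    A ≤ c • 1 ↔ ∀ x, x ⬝ᵥ A *ᵥ x ≤ c * (x ⬝ᵥ x) := by
  rw [le_iff, posSemidef_iff_dotProduct_mulVec]
  simp only [(isHermitian_one.smul (.all c)).sub hA, true_and, star_trivial, sub_mulVec,
    dotProduct_sub, dotProduct_smul_one_mulVec, sub_nonneg]

/-- With `z = A⁻¹ x` and `w = B⁻¹ x`, expand `0 ≤ (z - w)ᵀ A (z - w)` and use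
`wᵀ A w ≤ wᵀ B w = xᵀ B⁻¹ x`. -/
lemma Matrix.PosDef.inv_le_inv {A B : Matrix n n ℝ} (hA : A.PosDef) (hB : B.PosDef)
    (hAB : A ≤ B) : B⁻¹ ≤ A⁻¹ := by
  rw [le_iff]
  refine PosSemidef.of_dotProduct_mulVec_nonneg (hA.inv.isHermitian.sub hB.inv.isHermitian)
    fun x => ?_
  set z := A⁻¹ *ᵥ x
  set w := B⁻¹ *ᵥ x
  have hAz : A *ᵥ z = x := by
    rw [mulVec_mulVec, mul_nonsing_inv _ ((isUnit_iff_isUnit_det A).mp hA.isUnit), one_mulVec]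
  have hBw : B *ᵥ w = x := by
    rw [mulVec_mulVec, mul_nonsing_inv _ ((isUnit_iff_isUnit_det B).mp hB.isUnit), one_mulVec]
  have hzw := hA.posSemidef.dotProduct_mulVec_self_nonneg (z - w)
  have hw := (le_iff.mp hAB).dotProduct_mulVec_self_nonneg w
  simp only [sub_mulVec, mulVec_sub, dotProduct_sub, sub_dotProduct, hAz, hBw] at hzw hw
  simp only [star_trivial, sub_mulVec, dotProduct_sub]
  rw [hA.isHermitian.dotProduct_mulVec_comm z w, hAz] at hzw
  have : x ⬝ᵥ z = z ⬝ᵥ x := dotProduct_comm _ _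
  have : x ⬝ᵥ w = w ⬝ᵥ x := dotProduct_comm _ _
  linarith

lemma Matrix.inv_smul_one {c : ℝ} (hc : c ≠ 0) : (c • (1 : Matrix n n ℝ))⁻¹ = c⁻¹ • 1 :=
  inv_eq_right_inv (by rw [smul_mul_smul, mul_one, mul_inv_cancel₀ hc, one_smul])

lemma Matrix.PosDef.inv_le_smul_one {A : Matrix n n ℝ} (hA : A.PosDef) {c : ℝ} (hc : 0 < c)
    (h : c • 1 ≤ A) : A⁻¹ ≤ c⁻¹ • 1 := by
  simpa [inv_smul_one hc.ne'] using (PosDef.one.smul hc).inv_le_inv hA h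

lemma Matrix.PosDef.smul_one_le_inv {A : Matrix n n ℝ} (hA : A.PosDef) {c : ℝ} (hc : 0 < c)
    (h : A ≤ c • 1) : c⁻¹ • 1 ≤ A⁻¹ := by
  simpa [inv_smul_one hc.ne'] using hA.inv_le_inv (PosDef.one.smul hc) h

end QuadraticForm

section InverseUpdate

variable {n : Type*} [Fintype n] [DecidableEq n]

noncomputable def bfgsInvUpdate (G : Matrix n n ℝ) (s y : n → ℝ) : Matrix n n ℝ :=
  (1 - (y ⬝ᵥ s)⁻¹ • vecMulVec s y) * G * (1 - (y ⬝ᵥ s)⁻¹ • vecMulVec y s)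
    + (y ⬝ᵥ s)⁻¹ • vecMulVec s s

lemma bfgsInvUpdate_eq_conjTranspose_mul_mul (G : Matrix n n ℝ) (s y : n → ℝ) :
    bfgsInvUpdate G s y = (1 - (y ⬝ᵥ s)⁻¹ • vecMulVec y s)ᴴ * G * (1 - (y ⬝ᵥ s)⁻¹ • vecMulVec y s)
      + (y ⬝ᵥ s)⁻¹ • vecMulVec s s := by
  rw [bfgsInvUpdate, conjTranspose_eq_transpose_of_trivial, transpose_sub, transpose_one,
    transpose_smul, transpose_vecMulVec]

lemma isHermitian_bfgsInvUpdate {G : Matrix n n ℝ} (hG : G.IsHermitian) (s y : n → ℝ) :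
    (bfgsInvUpdate G s y).IsHermitian := by
  rw [bfgsInvUpdate_eq_conjTranspose_mul_mul]
  exact (isHermitian_conjTranspose_mul_mul _ hG).add
    ((posSemidef_vecMulVec_self_star s).isHermitian.smul (.all _))

lemma dotProduct_bfgsInvUpdate_mulVec (G : Matrix n n ℝ) (s y x : n → ℝ) :
    x ⬝ᵥ bfgsInvUpdate G s y *ᵥ x
      = (x - ((y ⬝ᵥ s)⁻¹ * (s ⬝ᵥ x)) • y) ⬝ᵥ G *ᵥ (x - ((y ⬝ᵥ s)⁻¹ * (s ⬝ᵥ x)) • y)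
        + (y ⬝ᵥ s)⁻¹ * (s ⬝ᵥ x) ^ 2 := by
  have hMx : (1 - (y ⬝ᵥ s)⁻¹ • vecMulVec y s) *ᵥ x = x - ((y ⬝ᵥ s)⁻¹ * (s ⬝ᵥ x)) • y := by
    rw [sub_mulVec, one_mulVec, smul_mulVec, vecMulVec_mulVec, op_smul_eq_smul, smul_smul,
      mul_comm]
  rw [bfgsInvUpdate_eq_conjTranspose_mul_mul, conjTranspose_eq_transpose_of_trivial, add_mulVec,
    dotProduct_add, ← mulVec_mulVec, ← mulVec_mulVec, dotProduct_mulVec, vecMul_transpose, hMx,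
    smul_mulVec, vecMulVec_mulVec, op_smul_eq_smul, dotProduct_smul, dotProduct_smul,
    dotProduct_comm x s, smul_eq_mul, smul_eq_mul, sq]

lemma posDef_bfgsInvUpdate {G : Matrix n n ℝ} (hG : G.PosDef) {s y : n → ℝ}
    (hys : 0 < y ⬝ᵥ s) : (bfgsInvUpdate G s y).PosDef := by
  refine PosDef.of_dotProduct_mulVec_pos (isHermitian_bfgsInvUpdate hG.isHermitian s y)
    fun x hx => ?_
  rw [star_trivial, dotProduct_bfgsInvUpdate_mulVec]
  rcases eq_or_ne (s ⬝ᵥ x) 0 with hsx | hsx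
  · simpa [hsx] using hG.dotProduct_mulVec_pos hx
  · have := hG.posSemidef.dotProduct_mulVec_self_nonneg (x - ((y ⬝ᵥ s)⁻¹ * (s ⬝ᵥ x)) • y)
    have : 0 < (y ⬝ᵥ s)⁻¹ * (s ⬝ᵥ x) ^ 2 := by positivity
    linarith

lemma bfgsInvUpdate_le_smul_one {G : Matrix n n ℝ} {s y : n → ℝ} {ε Λ γ : ℝ}
    (hG : G.IsHermitian) (hε : 0 < ε) (hΛ : 0 ≤ Λ) (hγ : 0 ≤ γ)
    (hys : ε * (s ⬝ᵥ s) ≤ y ⬝ᵥ s) (hyy : y ⬝ᵥ y ≤ Λ * (y ⬝ᵥ s)) (hGγ : G ≤ γ • 1) :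
    bfgsInvUpdate G s y ≤ (2 * (1 + Λ / ε) * γ + ε⁻¹) • 1 := by
  rw [(isHermitian_bfgsInvUpdate hG s y).le_smul_one_iff]
  intro x
  rw [dotProduct_bfgsInvUpdate_mulVec]
  set ρ := (y ⬝ᵥ s)⁻¹
  set t := ρ * (s ⬝ᵥ x)
  have hρ : 0 ≤ ρ := inv_nonneg.mpr ((mul_nonneg hε.le (dotProduct_self_nonneg s)).trans hys)
  have hρs : ρ * (s ⬝ᵥ s) ≤ ε⁻¹ := by
    rw [← one_div, le_div_iff₀' hε]
    calc ε * (ρ * (s ⬝ᵥ s)) = ρ * (ε * (s ⬝ᵥ s)) := by ring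
      _ ≤ ρ * (y ⬝ᵥ s) := mul_le_mul_of_nonneg_left hys hρ
      _ ≤ 1 := inv_mul_le_one
  have hsx : ρ * (s ⬝ᵥ x) ^ 2 ≤ ε⁻¹ * (x ⬝ᵥ x) :=
    calc ρ * (s ⬝ᵥ x) ^ 2 ≤ ρ * ((s ⬝ᵥ s) * (x ⬝ᵥ x)) :=
          mul_le_mul_of_nonneg_left (sq_dotProduct_le s x) hρ
      _ ≤ ε⁻¹ * (x ⬝ᵥ x) := by
          rw [← mul_assoc]; exact mul_le_mul_of_nonneg_right hρs (dotProduct_self_nonneg x)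
  have hρρ : ρ * (y ⬝ᵥ s) * ρ = ρ := by
    simpa only [inv_inv] using mul_inv_mul_cancel (y ⬝ᵥ s)⁻¹
  have hty : t ^ 2 * (y ⬝ᵥ y) ≤ Λ * (ρ * (s ⬝ᵥ x) ^ 2) :=
    calc t ^ 2 * (y ⬝ᵥ y) ≤ t ^ 2 * (Λ * (y ⬝ᵥ s)) := by gcongr
      _ = Λ * ((ρ * (y ⬝ᵥ s) * ρ) * (s ⬝ᵥ x) ^ 2) := by ring
      _ = Λ * (ρ * (s ⬝ᵥ x) ^ 2) := by rw [hρρ]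
  have hw : (x - t • y) ⬝ᵥ (x - t • y) ≤ 2 * (x ⬝ᵥ x) + 2 * (t ^ 2 * (y ⬝ᵥ y)) := by
    have := dotProduct_self_nonneg (x + t • y)
    simp only [dotProduct_add, add_dotProduct, dotProduct_sub, sub_dotProduct, dotProduct_smul,
      smul_dotProduct, smul_eq_mul, dotProduct_comm y x] at this ⊢
    nlinarith
  have hty' : t ^ 2 * (y ⬝ᵥ y) ≤ Λ * (ε⁻¹ * (x ⬝ᵥ x)) :=
    hty.trans (mul_le_mul_of_nonneg_left hsx hΛ)
  calc (x - t • y) ⬝ᵥ G *ᵥ (x - t • y) + ρ * (s ⬝ᵥ x) ^ 2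
      ≤ γ * ((x - t • y) ⬝ᵥ (x - t • y)) + ρ * (s ⬝ᵥ x) ^ 2 := by
        gcongr; exact (hG.le_smul_one_iff γ).mp hGγ _
    _ ≤ γ * (2 * (x ⬝ᵥ x) + 2 * (Λ * (ε⁻¹ * (x ⬝ᵥ x)))) + ε⁻¹ * (x ⬝ᵥ x) := by
        gcongr; linarith
    _ = (2 * (1 + Λ / ε) * γ + ε⁻¹) * (x ⬝ᵥ x) := by ring

end InverseUpdate

section Update

variable {d : ℕ} {H : Matrix (Fin d) (Fin d) ℝ} {s y : Fin d → ℝ}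

lemma bfgsUpdate_eq_of_isHermitian (hH : H.IsHermitian) :
    bfgsUpdate H s y = H - (s ⬝ᵥ H *ᵥ s)⁻¹ • vecMulVec (H *ᵥ s) (H *ᵥ s)
      + (y ⬝ᵥ s)⁻¹ • vecMulVec y y := by
  rw [bfgsUpdate, ← mulVec_transpose, ← conjTranspose_eq_transpose_of_trivial, hH.eq]

lemma isHermitian_bfgsUpdate (hH : H.IsHermitian) :
    (bfgsUpdate H s y).IsHermitian := by
  rw [bfgsUpdate_eq_of_isHermitian hH]
  exact (hH.sub ((posSemidef_vecMulVec_self_star _).isHermitian.smul (.all _))).add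
    ((posSemidef_vecMulVec_self_star y).isHermitian.smul (.all _))

lemma bfgsUpdate_mulVec_self (hH : H.IsHermitian) (hs : s ⬝ᵥ H *ᵥ s ≠ 0) (hys : y ⬝ᵥ s ≠ 0) :
    bfgsUpdate H s y *ᵥ s = y := by
  rw [bfgsUpdate_eq_of_isHermitian hH, add_mulVec, sub_mulVec, smul_mulVec, smul_mulVec,
    vecMulVec_mulVec, vecMulVec_mulVec, op_smul_eq_smul, op_smul_eq_smul, smul_smul, smul_smul,
    dotProduct_comm (H *ᵥ s), inv_mul_cancel₀ hs, inv_mul_cancel₀ hys, one_smul, one_smul,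
    sub_self, zero_add]

lemma dotProduct_bfgsUpdate_mulVec (hH : H.IsHermitian) (x : Fin d → ℝ) :
    x ⬝ᵥ bfgsUpdate H s y *ᵥ x = x ⬝ᵥ H *ᵥ x - (s ⬝ᵥ H *ᵥ s)⁻¹ * (H *ᵥ s ⬝ᵥ x) ^ 2
      + (y ⬝ᵥ s)⁻¹ * (y ⬝ᵥ x) ^ 2 := by
  simp only [bfgsUpdate_eq_of_isHermitian hH, add_mulVec, sub_mulVec, smul_mulVec,
    vecMulVec_mulVec, op_smul_eq_smul, dotProduct_add, dotProduct_sub, dotProduct_smul,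
    smul_eq_mul]
  rw [dotProduct_comm x (H *ᵥ s), dotProduct_comm x y]
  ring

lemma bfgsUpdate_mul_bfgsInvUpdate (hH : H.PosDef) (hs : s ≠ 0) (hys : y ⬝ᵥ s ≠ 0) :
    bfgsUpdate H s y * bfgsInvUpdate H⁻¹ s y = 1 := by
  set ρ := (y ⬝ᵥ s)⁻¹
  set a := H *ᵥ s
  set b := s ⬝ᵥ H *ᵥ s
  have hb : b ≠ 0 := (by simpa using hH.dotProduct_mulVec_pos hs : 0 < b).ne'
  have hsec := bfgsUpdate_mulVec_self hH.isHermitian hb hys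
  have hHH : H * H⁻¹ = 1 := mul_nonsing_inv _ ((isUnit_iff_isUnit_det _).mp hH.isUnit)
  have haH : a ᵥ* H⁻¹ = s := by
    rw [← mulVec_transpose, ← conjTranspose_eq_transpose_of_trivial, hH.inv.isHermitian.eq,
      mulVec_mulVec, nonsing_inv_mul _ ((isUnit_iff_isUnit_det _).mp hH.isUnit), one_mulVec]
  have h1 : bfgsUpdate H s y * (1 - ρ • vecMulVec s y) = H - b⁻¹ • vecMulVec a a := by
    rw [mul_sub, mul_one, Matrix.mul_smul, mul_vecMulVec, hsec,
      bfgsUpdate_eq_of_isHermitian hH.isHermitian, add_sub_cancel_right]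
  have h2 : (H - b⁻¹ • vecMulVec a a) * H⁻¹ = 1 - b⁻¹ • vecMulVec a s := by
    rw [sub_mul, hHH, smul_mul, vecMulVec_mul, haH]
  have h3 : (1 - b⁻¹ • vecMulVec a s) * (1 - ρ • vecMulVec y s) = 1 - ρ • vecMulVec y s := by
    rw [mul_sub, mul_one, sub_mul, one_mul, smul_mul, Matrix.mul_smul, vecMulVec_mul_vecMulVec,
      vecMulVec_smul, smul_smul, smul_smul, dotProduct_comm s y, inv_mul_cancel_right₀ hys]
    abel
  have h4 : bfgsUpdate H s y * (ρ • vecMulVec s s) = ρ • vecMulVec y s := by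
    rw [Matrix.mul_smul, mul_vecMulVec, hsec]
  rw [bfgsInvUpdate, mul_add, ← mul_assoc, ← mul_assoc, h1, h2, h3, h4, sub_add_cancel]

lemma inv_bfgsUpdate (hH : H.PosDef) (hs : s ≠ 0) (hys : y ⬝ᵥ s ≠ 0) :
    (bfgsUpdate H s y)⁻¹ = bfgsInvUpdate H⁻¹ s y :=
  inv_eq_right_inv (bfgsUpdate_mul_bfgsInvUpdate hH hs hys)

lemma posDef_bfgsUpdate (hH : H.PosDef) (hs : s ≠ 0) (hys : 0 < y ⬝ᵥ s) :
    (bfgsUpdate H s y).PosDef := by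
  rw [← posDef_inv_iff, inv_bfgsUpdate hH hs hys.ne']
  exact posDef_bfgsInvUpdate hH.inv hys

lemma bfgsUpdate_le_smul_one {α Λ : ℝ} (hH : H.PosSemidef) (hys : 0 < y ⬝ᵥ s)
    (hyy : y ⬝ᵥ y ≤ Λ * (y ⬝ᵥ s)) (hHα : H ≤ α • 1) : bfgsUpdate H s y ≤ (α + Λ) • 1 := by
  rw [(isHermitian_bfgsUpdate hH.isHermitian).le_smul_one_iff]
  intro x
  rw [dotProduct_bfgsUpdate_mulVec hH.isHermitian]
  have hHx := (hH.isHermitian.le_smul_one_iff α).mp hHα x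
  have hb : 0 ≤ (s ⬝ᵥ H *ᵥ s)⁻¹ * (H *ᵥ s ⬝ᵥ x) ^ 2 :=
    mul_nonneg (inv_nonneg.mpr (hH.dotProduct_mulVec_self_nonneg s)) (sq_nonneg _)
  have hρy : (y ⬝ᵥ s)⁻¹ * (y ⬝ᵥ y) ≤ Λ := by rwa [inv_mul_le_iff₀ hys, mul_comm]
  have hyx : (y ⬝ᵥ s)⁻¹ * (y ⬝ᵥ x) ^ 2 ≤ Λ * (x ⬝ᵥ x) :=
    calc (y ⬝ᵥ s)⁻¹ * (y ⬝ᵥ x) ^ 2 ≤ (y ⬝ᵥ s)⁻¹ * ((y ⬝ᵥ y) * (x ⬝ᵥ x)) :=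
          mul_le_mul_of_nonneg_left (sq_dotProduct_le y x) (inv_nonneg.mpr hys.le)
      _ ≤ Λ * (x ⬝ᵥ x) := by
          rw [← mul_assoc]; exact mul_le_mul_of_nonneg_right hρy (dotProduct_self_nonneg x)
  linarith

lemma bfgsUpdate_bounds {ε Λ α γ : ℝ} (hH : H.PosDef) (hs : s ≠ 0) (hε : 0 < ε) (hΛ : 0 ≤ Λ)
    (hγ : 0 ≤ γ) (hys : ε * (s ⬝ᵥ s) ≤ y ⬝ᵥ s) (hyy : y ⬝ᵥ y ≤ Λ * (y ⬝ᵥ s))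
    (hHα : H ≤ α • 1) (hHγ : H⁻¹ ≤ γ • 1) :
    (bfgsUpdate H s y).PosDef ∧ bfgsUpdate H s y ≤ (α + Λ) • 1 ∧
      (bfgsUpdate H s y)⁻¹ ≤ (2 * (1 + Λ / ε) * γ + ε⁻¹) • 1 := by
  have hys₀ : 0 < y ⬝ᵥ s := (mul_pos hε (dotProduct_self_pos hs)).trans_le hys
  refine ⟨posDef_bfgsUpdate hH hs hys₀, bfgsUpdate_le_smul_one hH.posSemidef hys₀ hyy hHα, ?_⟩
  rw [inv_bfgsUpdate hH hs hys₀.ne']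
  exact bfgsInvUpdate_le_smul_one hH.inv.isHermitian hε hΛ hγ hys hyy hHγ

end Update

noncomputable def bfgsInvBound (γ₀ Λ ε : ℝ) : ℕ → ℝ
  | 0 => γ₀
  | j + 1 => 2 * (1 + Λ / ε) * bfgsInvBound γ₀ Λ ε j + ε⁻¹

lemma bfgsInvBound_nonneg {γ₀ Λ ε : ℝ} (hγ₀ : 0 ≤ γ₀) (hΛ : 0 ≤ Λ) (hε : 0 < ε) :
    ∀ j, 0 ≤ bfgsInvBound γ₀ Λ ε j
  | 0 => hγ₀
  | j + 1 => by
    have := bfgsInvBound_nonneg hγ₀ hΛ hε j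
    rw [bfgsInvBound]
    positivity

lemma bfgs_iterate_bounds {d m : ℕ} {𝓗 : ℕ → Matrix (Fin d) (Fin d) ℝ} {s y : ℕ → Fin d → ℝ}
    {ε Λ α γ₀ : ℝ} (hε : 0 < ε) (hΛ : 0 ≤ Λ) (hγ₀ : 0 ≤ γ₀)
    (h₀ : (𝓗 0).PosDef) (hα : 𝓗 0 ≤ α • 1) (hγ : (𝓗 0)⁻¹ ≤ γ₀ • 1)
    (hs : ∀ j, 1 ≤ j → j ≤ m → s j ≠ 0)
    (hys : ∀ j, 1 ≤ j → j ≤ m → ε * (s j ⬝ᵥ s j) ≤ y j ⬝ᵥ s j)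
    (hyy : ∀ j, 1 ≤ j → j ≤ m → y j ⬝ᵥ y j ≤ Λ * (y j ⬝ᵥ s j))
    (hrec : ∀ j, j < m → 𝓗 (j + 1) = bfgsUpdate (𝓗 j) (s (j + 1)) (y (j + 1))) :
    ∀ j, j ≤ m → (𝓗 j).PosDef ∧ 𝓗 j ≤ (α + j * Λ) • 1 ∧
      (𝓗 j)⁻¹ ≤ bfgsInvBound γ₀ Λ ε j • 1
  | 0, _ => ⟨h₀, by simpa using hα, hγ⟩
  | j + 1, hj => by
    obtain ⟨hpd, hup, hinv⟩ := bfgs_iterate_bounds hε hΛ hγ₀ h₀ hα hγ hs hys hyy hrec j (by omega)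
    have hj₁ : 1 ≤ j + 1 := by omega
    rw [hrec j hj, Nat.cast_succ, add_one_mul, ← add_assoc, bfgsInvBound]
    exact bfgsUpdate_bounds hpd (hs _ hj₁ hj) hε hΛ (bfgsInvBound_nonneg hγ₀ hΛ hε j)
      (hys _ hj₁ hj) (hyy _ hj₁ hj) hup hinv

theorem stmt11_general (d m : ℕ)
    (σ Sig ε LamHat : ℝ) (hσ : 0 < σ) (hsS : σ ≤ Sig) (hε : 0 < ε) (hL : 0 < LamHat) :
    ∃ μ₁ μ₂ : ℝ, 0 < μ₁ ∧ μ₁ ≤ μ₂ ∧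
      ∀ (𝓗 : ℕ → Matrix (Fin d) (Fin d) ℝ) (s y : ℕ → Fin d → ℝ),
        (𝓗 0).IsSymm →
        (𝓗 0 - Sig⁻¹ • (1 : Matrix (Fin d) (Fin d) ℝ)).PosSemidef →
        (σ⁻¹ • (1 : Matrix (Fin d) (Fin d) ℝ) - 𝓗 0).PosSemidef →
        (∀ j, 1 ≤ j → j ≤ m → s j ≠ 0) →
        (∀ j, 1 ≤ j → j ≤ m → y j ⬝ᵥ s j ≥ ε * (s j ⬝ᵥ s j)) →
        (∀ j, 1 ≤ j → j ≤ m → y j ⬝ᵥ y j ≤ LamHat * (y j ⬝ᵥ s j)) →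
        (∀ j, j < m → 𝓗 (j + 1) = bfgsUpdate (𝓗 j) (s (j + 1)) (y (j + 1))) →
        (∀ j, j ≤ m → (𝓗 j).PosDef) ∧
          ((𝓗 m)⁻¹ - μ₁ • (1 : Matrix (Fin d) (Fin d) ℝ)).PosSemidef ∧
          (μ₂ • (1 : Matrix (Fin d) (Fin d) ℝ) - (𝓗 m)⁻¹).PosSemidef := by
  set μ₁ := (σ⁻¹ + m * LamHat)⁻¹
  refine ⟨μ₁, max (bfgsInvBound Sig LamHat ε m) μ₁, by positivity, le_max_right _ _, ?_⟩
  intro 𝓗 s y _ hlow hup hs hys hyy hrec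
  have hSig : 0 < Sig⁻¹ := inv_pos.mpr (hσ.trans_le hsS)
  have h₀ : (𝓗 0).PosDef := by simpa using (PosDef.one.smul hSig).add_posSemidef hlow
  have hinv₀ : (𝓗 0)⁻¹ ≤ Sig • 1 := by simpa using h₀.inv_le_smul_one hSig hlow
  have hbounds := bfgs_iterate_bounds hε hL.le (hσ.trans_le hsS).le h₀ hup hinv₀ hs hys hyy hrec
  obtain ⟨hpd, hupm, hinvm⟩ := hbounds m le_rfl
  refine ⟨fun j hj => (hbounds j hj).1, hpd.smul_one_le_inv (by positivity) hupm, ?_⟩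
  exact hinvm.trans (le_iff.mpr (by
    rw [← sub_smul]; exact PosSemidef.one.smul (sub_nonneg.mpr (le_max_left _ _))))

theorem stmt11 (d m : ℕ) (hd : 1 ≤ d) (hm : 1 ≤ m)
    (σ Sig ε LamHat : ℝ) (hσ : 0 < σ) (hsS : σ ≤ Sig) (hε : 0 < ε) (hL : 0 < LamHat) :
    ∃ μ₁ μ₂ : ℝ, 0 < μ₁ ∧ μ₁ ≤ μ₂ ∧
      ∀ (𝓗 : ℕ → Matrix (Fin d) (Fin d) ℝ) (s y : ℕ → Fin d → ℝ),
        (𝓗 0).IsSymm →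
        (𝓗 0 - Sig⁻¹ • (1 : Matrix (Fin d) (Fin d) ℝ)).PosSemidef →
        (σ⁻¹ • (1 : Matrix (Fin d) (Fin d) ℝ) - 𝓗 0).PosSemidef →
        (∀ j, 1 ≤ j → j ≤ m → s j ≠ 0) →
        (∀ j, 1 ≤ j → j ≤ m → y j ⬝ᵥ s j ≥ ε * (s j ⬝ᵥ s j)) →
        (∀ j, 1 ≤ j → j ≤ m → y j ⬝ᵥ y j ≤ LamHat * (y j ⬝ᵥ s j)) →
        (∀ j, j < m → 𝓗 (j + 1) = bfgsUpdate (𝓗 j) (s (j + 1)) (y (j + 1))) →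
        (∀ j, j ≤ m → (𝓗 j).PosDef) ∧
          ((𝓗 m)⁻¹ - μ₁ • (1 : Matrix (Fin d) (Fin d) ℝ)).PosSemidef ∧
          (μ₂ • (1 : Matrix (Fin d) (Fin d) ℝ) - (𝓗 m)⁻¹).PosSemidef :=
  stmt11_general d m σ Sig ε LamHat hσ hsS hε hL
end
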